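/- arXiv:math/9205201 — 2 statements merged into one kernel-verified Lean document; each statement's English description precedes it below -/
import Mathlib

section
/- Suppose A ⊆ ω^ω is the projection p[T] of a tree T on ω × κ with |T| ≤ ℵ₁. If |A| > ℵ₁ then A contains a perfect set. -/
open Cardinal

namespace Paper

/-- Formulas in the language of set theory with one unary predicate symbol. -/
inductive Fml : Type
  | mem : ℕ → ℕ → Fml
  | eq : ℕ → ℕ → Fml
  | pred : ℕ → Fml
  | not : Fml → Fml
  | and : Fml → Fml → Fml
  | ex : ℕ → Fml → Fml

/-- Satisfaction of a formula in the structure `(M, ∈, A)`, quantifiers relativized to `M`. -/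
def Realize (M A : ZFSet) : Fml → (ℕ → ZFSet) → Prop
  | .mem i j, v => v i ∈ v j
  | .eq i j, v => v i = v j
  | .pred i, v => v i ∈ A
  | .not φ, v => ¬ Realize M A φ v
  | .and φ ψ, v => Realize M A φ v ∧ Realize M A ψ v
  | .ex i φ, v => ∃ z : ZFSet, z ∈ M ∧ Realize M A φ (Function.update v i z)

/-- The definable (with parameters) power set of `M`, in the language with predicate `A`. -/
noncomputable def defSet (A M : ZFSet) : ZFSet :=
  (ZFSet.powerset M).sep fun y =>
    ∃ (φ : Fml) (v : ℕ → ZFSet), (∀ n, v n ∈ M) ∧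
      y = M.sep fun z => Realize M A φ (Function.update v 0 z)

/-- The constructible hierarchy relative to the predicate `A`. -/
noncomputable def LSet (A : ZFSet) (α : Ordinal.{0}) : ZFSet :=
  ZFSet.sUnion (ZFSet.range fun β : α.ToType =>
    defSet A (LSet A ((@Ordinal.ToType.mk α).symm β)))
termination_by α
decreasing_by exact ((@Ordinal.ToType.mk α).symm β).2

/-- `x` belongs to the inner model `L[A]`. -/
def inL (A x : ZFSet) : Prop := ∃ α : Ordinal.{0}, x ∈ LSet A α

/-- The von Neumann ordinal corresponding to an ordinal. -/
noncomputable def ordZF (α : Ordinal.{0}) : ZFSet :=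
  ZFSet.range fun β : α.ToType => ordZF ((@Ordinal.ToType.mk α).symm β)
termination_by α
decreasing_by exact ((@Ordinal.ToType.mk α).symm β).2

/-- The real `x : ℕ → ℕ` coded as a ZF set (its graph). -/
noncomputable def realZF (x : ℕ → ℕ) : ZFSet :=
  ZFSet.range fun n : ℕ => ZFSet.pair (ordZF n) (ordZF (x n))

/-- The set of reals (as coded in `ZFSet`) of the inner model `L[A]`. -/
def realsOfL (A : ZFSet) : Set ZFSet :=
  {y | y ∈ ZFSet.powerset ZFSet.omega ∧ inL A y}

/-- A tree on `ω × κ`: a length-matched, prefix-closed set of pairs of finite sequences. -/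
def IsTreeOn (κ : Ordinal.{0}) (T : Set (List ℕ × List κ.ToType)) : Prop :=
  ∀ p ∈ T, p.1.length = p.2.length ∧ ∀ n : ℕ, (p.1.take n, p.2.take n) ∈ T

/-- The projection `p[T]` of a tree on `ω × κ`. -/
def projT (κ : Ordinal.{0}) (T : Set (List ℕ × List κ.ToType)) : Set (ℕ → ℕ) :=
  {x | ∃ f : ℕ → κ.ToType, ∀ n : ℕ,
    ((List.ofFn fun i : Fin n => x i), (List.ofFn fun i : Fin n => f i)) ∈ T}

/-- Coding of a list as a ZF set, given a coding of the entries. -/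
noncomputable def listZF {β : Type} (g : β → ZFSet) : List β → ZFSet
  | [] => ∅
  | a :: l => ZFSet.pair (g a) (listZF g l)

/-- Code a tree on `ω × κ` as a set of ordinals-based codes, a `ZFSet`. -/
noncomputable def treeZF (κ : Ordinal.{0}) (T : Set (List ℕ × List κ.ToType)) : ZFSet :=
  ZFSet.range fun p : T =>
    ZFSet.pair (listZF (fun n : ℕ => ordZF n) p.1.1)
      (listZF (fun b : κ.ToType => ordZF ((@Ordinal.ToType.mk κ).symm b).1) p.1.2)

/-- The cumulative hierarchy. -/
noncomputable def Vrank (α : Ordinal.{0}) : ZFSet :=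
  ZFSet.sUnion (ZFSet.range fun β : α.ToType =>
    ZFSet.powerset (Vrank ((@Ordinal.ToType.mk α).symm β)))
termination_by α
decreasing_by exact ((@Ordinal.ToType.mk α).symm β).2

/-- `N` is an elementary submodel of `M` (in the pure language of set theory). -/
def ElemSub (N M : ZFSet) : Prop :=
  N ⊆ M ∧ ∀ (φ : Fml) (v : ℕ → ZFSet), (∀ n, v n ∈ N) →
    (Realize N ∅ φ v ↔ Realize M ∅ φ v)

/-!
Call a node of `T` big if more than `ℵ₁` reals have a branch of `T` through it. A real that has
a branch through a node which is not big lies in a union of `|T| ≤ ℵ₁` sets of size `≤ ℵ₁`, so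
at most `ℵ₁` reals are of this kind. Above a big node `p` the remaining reals through `p` have
all their nodes big; if the big nodes above `p` formed a single path there would be at most one
such real, so `p` has two big extensions of the same length with different stems. Iterating this
splitting along each `g : ℕ → Bool` gives a continuous injection of Cantor space into `p[T]`,
whose range is a perfect set.
-/

open Function Set Filter Topology

section Lists

variable {α : Type*}

theorem ofFn_prefix_ofFn (x : ℕ → α) {m n : ℕ} (h : m ≤ n) :
    (List.ofFn fun i : Fin m => x i) <+: List.ofFn fun i : Fin n => x i := by
  rw [List.prefix_iff_eq_take]
  exact List.ext_getElem (by simp [h]) fun i _ _ => by simp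

theorem ofFn_eq_take {x : ℕ → α} {l : List α} (hx : ∀ i (hi : i < l.length), x i = l[i])
    {n : ℕ} (hn : n ≤ l.length) : (List.ofFn fun i : Fin n => x i) = l.take n :=
  List.ext_getElem (by simp [hn]) fun i _ hi => by simp [hx i (by simp at hi; omega)]

theorem exists_forall_getElem_eq_of_prefix {L : ℕ → List α} (hL : ∀ n, L n <+: L (n + 1))
    (hlen : ∀ n, n ≤ (L n).length) :
    ∃ x : ℕ → α, ∀ n i (hi : i < (L n).length), x i = (L n)[i] := by
  have hmono := Nat.rel_of_forall_rel_succ_of_le (· <+: ·) hL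
  refine ⟨fun i => (L (i + 1))[i]'(by have := hlen (i + 1); omega), fun n i hi => ?_⟩
  rcases le_total n (i + 1) with h | h
  · exact ((hmono h).getElem hi).symm
  · exact (hmono h).getElem _

theorem length_lt_of_prefix_of_ne {l l₁ l₂ : List α} (h₁ : l <+: l₁) (h₂ : l <+: l₂)
    (hlen : l₁.length = l₂.length) (hne : l₁ ≠ l₂) : l.length < l₁.length := by
  refine h₁.length_le.lt_of_ne fun h => hne ?_
  rw [← h₁.eq_of_length h, h₂.eq_of_length (h.trans hlen)]

end Lists

instance {E : Type*} [TopologicalSpace E] [Nontrivial E] : PerfectSpace (ℕ → E) where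
  univ_preperfect := preperfect_iff_nhds.2 fun g _ U hU => by
    choose e he using fun n => exists_ne (g n)
    have hflip : Tendsto (fun n => update g n (e n)) atTop (𝓝 g) :=
      tendsto_pi_nhds.2 fun i => tendsto_const_nhds.congr' <|
        (eventually_gt_atTop i).mono fun n hn => by simp [update_of_ne hn.ne]
    obtain ⟨n, hn⟩ := (hflip.eventually_mem hU).exists
    exact ⟨_, ⟨hn, trivial⟩, fun h => he n (by simpa using congrFun h n)⟩

theorem perfect_range_of_continuous_injective {X Y : Type*} [TopologicalSpace X]
    [CompactSpace X] [PerfectSpace X] [TopologicalSpace Y] [T2Space Y] {φ : X → Y}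
    (hc : Continuous φ) (hi : Injective φ) : Perfect (range φ) := by
  refine ⟨(isCompact_range hc).isClosed, preperfect_iff_nhds.2 ?_⟩
  rintro _ ⟨x, rfl⟩ U hU
  obtain ⟨z, hz, hzx⟩ :=
    preperfect_iff_nhds.1 PerfectSpace.univ_preperfect x trivial _ (hc.continuousAt hU)
  exact ⟨φ z, ⟨hz.1, z, rfl⟩, hi.ne hzx⟩

theorem continuous_of_apply_depends_on_initial_segment {E : ℕ → Type*}
    [∀ n, TopologicalSpace (E n)] [∀ n, DiscreteTopology (E n)] {β : Type*} [TopologicalSpace β]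
    {x : (∀ n, E n) → ℕ → β} (N : ℕ → ℕ)
    (hx : ∀ g h m, (∀ i < N m, g i = h i) → x g m = x h m) : Continuous x := by
  refine continuous_pi fun m => continuous_iff_continuousAt.2 fun g => ?_
  refine (continuousAt_const (y := x g m)).congr ?_
  filter_upwards [(PiNat.isOpen_cylinder E g (N m)).mem_nhds (PiNat.self_mem_cylinder g _)]
    with h hh
  exact hx g h m fun i hi => (PiNat.mem_cylinder_iff.1 hh i hi).symm

def schemeNode {N : Type*} (root : N) (s : N → Bool → N) (g : ℕ → Bool) : ℕ → N
  | 0 => root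
  | n + 1 => s (schemeNode root s g n) (g n)

theorem schemeNode_congr {N : Type*} {root : N} {s : N → Bool → N} {g h : ℕ → Bool} {n : ℕ}
    (hgh : ∀ i < n, g i = h i) : schemeNode root s g n = schemeNode root s h n := by
  induction n with
  | zero => rfl
  | succ n ih => simp only [schemeNode, ih fun i hi => hgh i (by omega), hgh n (by omega)]

section Trees

variable {κ : Ordinal.{0}} {T : Set (List ℕ × List κ.ToType)}

def IsNodePrefix (p q : List ℕ × List κ.ToType) : Prop := p.1 <+: q.1 ∧ p.2 <+: q.2

def node (x : ℕ → ℕ) (f : ℕ → κ.ToType) (n : ℕ) : List ℕ × List κ.ToType :=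
  (List.ofFn fun i : Fin n => x i, List.ofFn fun i : Fin n => f i)

@[simp]
theorem length_node_fst (x : ℕ → ℕ) (f : ℕ → κ.ToType) (n : ℕ) : (node x f n).1.length = n := by
  simp [node]

theorem isNodePrefix_node (x : ℕ → ℕ) (f : ℕ → κ.ToType) {m n : ℕ} (h : m ≤ n) :
    IsNodePrefix (node x f m) (node x f n) :=
  ⟨ofFn_prefix_ofFn x h, ofFn_prefix_ofFn f h⟩

theorem exists_splitMap {S : Set (List ℕ × List κ.ToType)}
    (hsplit : ∀ p ∈ S, ∃ q ∈ S, ∃ r ∈ S, IsNodePrefix p q ∧ IsNodePrefix p r ∧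
      q.1.length = r.1.length ∧ q.1 ≠ r.1) :
    ∃ s : S → Bool → S, (∀ p b, IsNodePrefix p.1 (s p b).1) ∧
      (∀ p b b', (s p b).1.1.length = (s p b').1.1.length) ∧
      ∀ p, Injective fun b => (s p b).1.1 := by
  choose q hq r hr hpq hpr hlen hne using hsplit
  refine ⟨fun p b => bif b then ⟨_, hq p p.2⟩ else ⟨_, hr p p.2⟩, ?_, ?_, ?_⟩
  · rintro p (_ | _) <;> simp [hpq, hpr]
  · rintro p (_ | _) (_ | _) <;> simp [hlen]
  · rintro p (_ | _) (_ | _) <;> simp [hne, (hne _ _).symm]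

theorem exists_continuous_injective_of_splitMap (hT : IsTreeOn κ T)
    {S : Set (List ℕ × List κ.ToType)} (hST : S ⊆ T) (p₀ : S) (s : S → Bool → S)
    (hpre : ∀ p b, IsNodePrefix p.1 (s p b).1)
    (hlen : ∀ p b b', (s p b).1.1.length = (s p b').1.1.length)
    (hinj : ∀ p, Injective fun b => (s p b).1.1) :
    ∃ φ : (ℕ → Bool) → ℕ → ℕ, Continuous φ ∧ Injective φ ∧ range φ ⊆ projT κ T := by
  set P : (ℕ → Bool) → ℕ → S := schemeNode p₀ s
  have hstep : ∀ g n, P g (n + 1) = s (P g n) (g n) := fun _ _ => rfl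
  have hmem : ∀ g n, (P g n).1 ∈ T := fun g n => hST (P g n).2
  have hgrow : ∀ g n, n ≤ (P g n).1.1.length := by
    intro g n
    induction n with
    | zero => exact Nat.zero_le _
    | succ n ih =>
      refine ih.trans_lt (length_lt_of_prefix_of_ne (hpre _ (g n)).1 (hpre _ (!g n)).1
        (hlen _ _ _) ?_)
      exact (hinj _).ne (Bool.not_ne_self (g n)).symm
  have hgrow₂ : ∀ g n, n ≤ (P g n).1.2.length := fun g n => (hT _ (hmem g n)).1 ▸ hgrow g n
  choose x hx using fun g =>
    exists_forall_getElem_eq_of_prefix (fun n => (hpre (P g n) (g n)).1) (hgrow g)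
  choose f hf using fun g =>
    exists_forall_getElem_eq_of_prefix (fun n => (hpre (P g n) (g n)).2) (hgrow₂ g)
  refine ⟨x, continuous_of_apply_depends_on_initial_segment (· + 1) fun g h m hgh => ?_,
    fun g h hgh => ?_, ?_⟩
  · rw [hx g (m + 1) m (Nat.lt_of_lt_of_le m.lt_succ_self (hgrow g (m + 1))),
      hx h (m + 1) m (Nat.lt_of_lt_of_le m.lt_succ_self (hgrow h (m + 1)))]
    exact List.getElem_of_eq (congrArg (fun p : S => p.1.1) (schemeNode_congr hgh)) _
  · by_contra hne
    set n := PiNat.firstDiff g h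
    have hroot : P g n = P h n := schemeNode_congr fun i hi => PiNat.apply_eq_of_lt_firstDiff hi
    have hl : (P g (n + 1)).1.1.length = (P h (n + 1)).1.1.length := by
      rw [hstep, hstep, hroot, hlen]
    have hstem : (P g (n + 1)).1.1 = (P h (n + 1)).1.1 :=
      List.ext_getElem hl fun i hi hi' => by rw [← hx g _ i hi, ← hx h _ i hi', hgh]
    rw [hstep, hstep, hroot] at hstem
    exact PiNat.apply_firstDiff_ne hne (hinj _ hstem)
  · rintro _ ⟨g, rfl⟩
    refine ⟨f g, fun n => ?_⟩
    rw [ofFn_eq_take (hx g n) (hgrow g n), ofFn_eq_take (hf g n) (hgrow₂ g n)]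
    exact (hT _ (hmem g n)).2 n

def branchesThrough (T : Set (List ℕ × List κ.ToType)) (p : List ℕ × List κ.ToType) :
    Set (ℕ → ℕ) :=
  {x | ∃ f, (∀ n, node x f n ∈ T) ∧ node x f p.1.length = p}

def bigNodes (T : Set (List ℕ × List κ.ToType)) : Set (List ℕ × List κ.ToType) :=
  {p ∈ T | aleph 1 < #(branchesThrough T p)}

def smallBranches (T : Set (List ℕ × List κ.ToType)) : Set (ℕ → ℕ) :=
  ⋃ q ∈ T \ bigNodes T, branchesThrough T q

theorem nil_mem_bigNodes (hbig : aleph 1 < #(projT κ T)) :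
    (([], []) : List ℕ × List κ.ToType) ∈ bigNodes T := by
  have hroot : branchesThrough T ([], []) = projT κ T := by
    ext x
    simp [branchesThrough, projT, node]
  obtain ⟨x, f, hf⟩ := nonempty_coe_sort.1 (mk_ne_zero_iff.1 (ne_bot_of_gt hbig))
  exact ⟨by simpa using hf 0, hroot ▸ hbig⟩

theorem mk_smallBranches_le (hcard : #T ≤ aleph 1) : #(smallBranches T) ≤ aleph 1 := by
  have hsmall : ⨆ q : ↥(T \ bigNodes T), #(branchesThrough T q) ≤ aleph 1 :=
    ciSup_le' fun q => not_lt.1 fun h => q.2.2 ⟨q.2.1, h⟩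
  calc #(smallBranches T)
      ≤ #↥(T \ bigNodes T) * ⨆ q : ↥(T \ bigNodes T), #(branchesThrough T q) :=
        mk_biUnion_le _ _
    _ ≤ aleph 1 * aleph 1 := mul_le_mul' ((mk_le_mk_of_subset sdiff_subset).trans hcard) hsmall
    _ = aleph 1 := mul_eq_self (aleph0_le_aleph 1)

theorem node_mem_bigNodes {x : ℕ → ℕ} {f : ℕ → κ.ToType} (hx : x ∉ smallBranches T)
    (hf : ∀ n, node x f n ∈ T) (n : ℕ) : node x f n ∈ bigNodes T := by
  by_contra hbig
  exact hx (mem_biUnion ⟨hf n, hbig⟩ ⟨f, hf, by simp⟩)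

theorem subsingleton_branchesThrough_diff_smallBranches {p : List ℕ × List κ.ToType}
    (hno : ∀ q ∈ bigNodes T, ∀ r ∈ bigNodes T, IsNodePrefix p q → IsNodePrefix p r →
      q.1.length = r.1.length → q.1 = r.1) :
    (branchesThrough T p \ smallBranches T).Subsingleton := by
  rintro x ⟨⟨f, hf, hfp⟩, hx⟩ y ⟨⟨g, hg, hgp⟩, hy⟩
  funext m
  obtain ⟨n, hpn, hmn⟩ : ∃ n, p.1.length ≤ n ∧ m < n :=
    ⟨max p.1.length (m + 1), le_max_left _ _, by omega⟩
  have hstem := hno _ (node_mem_bigNodes hx hf n) _ (node_mem_bigNodes hy hg n)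
    (hfp ▸ isNodePrefix_node x f hpn) (hgp ▸ isNodePrefix_node y g hpn) (by simp)
  simpa using congrFun (List.ofFn_injective hstem) ⟨m, hmn⟩

theorem exists_split_of_mem_bigNodes (hcard : #T ≤ aleph 1) {p : List ℕ × List κ.ToType}
    (hp : p ∈ bigNodes T) :
    ∃ q ∈ bigNodes T, ∃ r ∈ bigNodes T, IsNodePrefix p q ∧ IsNodePrefix p r ∧
      q.1.length = r.1.length ∧ q.1 ≠ r.1 := by
  by_contra! hno
  have hsub :=
    mk_le_one_iff_set_subsingleton.2 (subsingleton_branchesThrough_diff_smallBranches hno)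
  refine hp.2.not_ge ?_
  calc #(branchesThrough T p)
      ≤ #↥(branchesThrough T p \ smallBranches T ∪ smallBranches T) :=
        mk_le_mk_of_subset (subset_sdiff_union _ _)
    _ ≤ 1 + aleph 1 := (mk_union_le _ _).trans (add_le_add hsub (mk_smallBranches_le hcard))
    _ = aleph 1 := add_eq_right (aleph0_le_aleph 1) (one_le_aleph0.trans (aleph0_le_aleph 1))

end Trees

/-- If `A = p[T]` for a tree `T` on `ω × κ` with `|T| ≤ ℵ₁` and `|A| > ℵ₁`,
then `A` contains a perfect set. -/
theorem stmt3 (κ : Ordinal.{0}) (T : Set (List ℕ × List κ.ToType))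
    (hT : IsTreeOn κ T) (hcard : Cardinal.mk T ≤ Cardinal.aleph 1)
    (A : Set (ℕ → ℕ)) (hA : A = projT κ T)
    (hbig : Cardinal.aleph 1 < Cardinal.mk A) :
    ∃ C ⊆ A, Perfect C ∧ C.Nonempty := by
  subst hA
  obtain ⟨s, hpre, hlen, hinj⟩ :=
    exists_splitMap fun _ hp => exists_split_of_mem_bigNodes hcard hp
  obtain ⟨φ, hφc, hφi, hφA⟩ := exists_continuous_injective_of_splitMap hT (fun _ hp => hp.1)
    ⟨_, nil_mem_bigNodes hbig⟩ s hpre hlen hinj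
  exact ⟨range φ, hφA, perfect_range_of_continuous_injective hφc hφi, range_nonempty φ⟩

end Paper
end

section
/- (Well-definedness subclaim) In the setting above, if τ₁(c_{β_1},…,c_{β_n}) = τ₂(c_{β_k},…,c_{β_n}) holds in m', f(τ₁(c_1,…,c_n)) = σ₁(u_1,…,u_n) and f(τ₂(c_1,…,c_{n+1−k})) = σ₂(u_1,…,u_{n+1−k}), then σ₂(u_{β_k},…,u_{β_n}) = σ₁(u_{β_1},…,u_{β_n}); hence f_{ω₁} is well defined. -/
open Cardinal FirstOrder

namespace Paper

/-- Indices for the `ω₁`-sequence of indiscernibles. -/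
def Idx : Type 1 := {β : Ordinal.{0} // β < (Cardinal.aleph 1).ord}

noncomputable instance : LinearOrder Idx := inferInstanceAs (LinearOrder {β : Ordinal.{0} // β < _})

/-- The `n`-th natural index. -/
noncomputable def natIdx (n : ℕ) : Idx :=
  ⟨(n : Ordinal.{0}), lt_of_lt_of_le (Ordinal.nat_lt_omega0 n)
    (by simpa using Cardinal.ord_le_ord.2 (le_of_lt (Cardinal.aleph0_lt_aleph_one)))⟩

/-- The tuple of the first `n` natural indices `c_0 < ⋯ < c_{n-1}`. -/
noncomputable def natTuple (n : ℕ) : Fin n → Idx := fun i => natIdx i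

/-- The ordering of the ordinals of the model, as realized by the relation symbol `lt`. -/
def ltM (L : Language) (M : Type 1) [L.Structure M] (lt : L.Relations 2) (x y : M) : Prop :=
  Language.Structure.RelMap lt ![x, y]

/-- The indices `k-1, …, n-1` of the tail `β_k, …, β_n` of an `n`-tuple (1-based in the paper). -/
def tailIndex {n k : ℕ} (hk : 0 < k) (hkn : k ≤ n) (j : Fin (n + 1 - k)) : Fin n :=
  (Fin.natAdd (k - 1) j).cast (by omega)

theorem tailIndex_strictMono {n k : ℕ} (hk : 0 < k) (hkn : k ≤ n) :
    StrictMono (tailIndex hk hkn) := fun _ _ hij => Nat.add_lt_add_left hij _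

theorem natIdx_strictMono : StrictMono natIdx := fun _ _ h => (Nat.cast_lt (α := Ordinal)).2 h

theorem natTuple_strictMono (n : ℕ) : StrictMono (natTuple n) :=
  natIdx_strictMono.comp Fin.val_strictMono

def SameOrderType {ι κ α β : Type*} [Preorder α] [Preorder β]
    (a : ι → α) (b : κ → α) (a' : ι → β) (b' : κ → β) : Prop :=
  ∀ i j, (a i < b j ↔ a' i < b' j) ∧ (b j < a i ↔ b' j < a' i) ∧ (a i = b j ↔ a' i = b' j)

theorem sameOrderType_comp {ι κ α β : Type*} [LinearOrder ι] [Preorder α] [Preorder β]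
    {a : ι → α} {a' : ι → β} (ha : StrictMono a) (ha' : StrictMono a') (ρ : κ → ι) :
    SameOrderType a (a ∘ ρ) a' (a' ∘ ρ) := fun _ _ =>
  ⟨ha.lt_iff_lt.trans ha'.lt_iff_lt.symm, ha.lt_iff_lt.trans ha'.lt_iff_lt.symm,
    ha.injective.eq_iff.trans ha'.injective.eq_iff.symm⟩

theorem term_realize_eq_comp_of_realize_iff {L : Language} {M ι : Type*} [L.Structure M]
    {c : ι → M} {n m : ℕ} {β γ : Fin n → ι}
    (hβγ : ∀ φ : L.Formula (Fin n), φ.Realize (c ∘ β) ↔ φ.Realize (c ∘ γ))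
    (t₁ : L.Term (Fin n)) (t₂ : L.Term (Fin m)) (ρ : Fin m → Fin n)
    (h : t₁.realize (c ∘ β) = t₂.realize (c ∘ β ∘ ρ)) :
    t₁.realize (c ∘ γ) = t₂.realize (c ∘ γ ∘ ρ) := by
  have := (hβγ (t₁.equal (t₂.relabel ρ))).1
  simp only [Language.Formula.realize_equal, Language.Term.realize_relabel] at this
  exact this h

/-- Well-definedness subclaim: if `τ₁(c_{β₁},…,c_{β_n}) = τ₂(c_{β_k},…,c_{β_n})` holds in the
Ehrenfeucht–Mostowski extension, `f(τ₁(c₁,…,c_n)) = σ₁(u₁,…,u_n)` and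
`f(τ₂(c₁,…,c_{n+1-k})) = σ₂(u₁,…,u_{n+1-k})`, then
`σ₂(u_{β_k},…,u_{β_n}) = σ₁(u_{β_1},…,u_{β_n})`; hence `f_{ω₁}` is well defined. -/
theorem stmt11 (L : Language) (M : Type 1) [L.Structure M]
    (c : Idx → M)
    (hindisc : ∀ (n : ℕ) (φ : L.Formula (Fin n)) (β γ : Fin n → Idx),
      StrictMono β → StrictMono γ → (φ.Realize (c ∘ β) ↔ φ.Realize (c ∘ γ)))
    (u : Idx → Ordinal.{0})
    (fam : ∀ m : ℕ, Set ((Fin m → Ordinal.{0}) → Ordinal.{0}))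
    (hufam : ∀ (m₁ m₂ : ℕ) (σ₁ : (Fin m₁ → Ordinal.{0}) → Ordinal.{0})
      (σ₂ : (Fin m₂ → Ordinal.{0}) → Ordinal.{0}), σ₁ ∈ fam m₁ → σ₂ ∈ fam m₂ →
      ∀ (a a' : Fin m₁ → Idx) (b b' : Fin m₂ → Idx),
        StrictMono a → StrictMono a' → StrictMono b → StrictMono b' →
        (∀ i j, (a i < b j ↔ a' i < b' j) ∧ (b j < a i ↔ b' j < a' i) ∧
          (a i = b j ↔ a' i = b' j)) →
        (σ₁ (u ∘ a) = σ₂ (u ∘ b) ↔ σ₁ (u ∘ a') = σ₂ (u ∘ b')))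
    (f : M → Ordinal.{0})
    (hshift : ∀ (n : ℕ) (t : L.Term (Fin n)) (m : ℕ) (hm : m ≤ n)
      (σ : (Fin m → Ordinal.{0}) → Ordinal.{0}), σ ∈ fam m →
      f (t.realize (c ∘ natTuple n)) = σ (u ∘ natTuple m) →
      ∀ l : Fin n → ℕ, StrictMono l →
        f (t.realize (c ∘ fun i : Fin n => natIdx (l i))) =
          σ (fun j : Fin m => u (natIdx (l (Fin.castLE hm j)))))
    (n k : ℕ) (hk : 0 < k) (hkn : k ≤ n)
    (t₁ : L.Term (Fin n)) (t₂ : L.Term (Fin (n + 1 - k)))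
    (β : Fin n → Idx) (hβ : StrictMono β)
    -- `τ₁(c_{β₁},…,c_{β_n}) = τ₂(c_{β_k},…,c_{β_n})` in `m'`
    (heq : t₁.realize (c ∘ β) =
      t₂.realize (c ∘ fun j : Fin (n + 1 - k) => β ⟨k - 1 + j.1, by omega⟩))
    (σ₁ : (Fin n → Ordinal.{0}) → Ordinal.{0}) (hσ₁ : σ₁ ∈ fam n)
    (σ₂ : (Fin (n + 1 - k) → Ordinal.{0}) → Ordinal.{0}) (hσ₂ : σ₂ ∈ fam (n + 1 - k))
    (hf₁ : f (t₁.realize (c ∘ natTuple n)) = σ₁ (u ∘ natTuple n))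
    (hf₂ : f (t₂.realize (c ∘ natTuple (n + 1 - k))) = σ₂ (u ∘ natTuple (n + 1 - k))) :
    σ₂ (fun j : Fin (n + 1 - k) => u (β ⟨k - 1 + j.1, by omega⟩)) =
      σ₁ (fun i : Fin n => u (β i)) := by
  set ρ := tailIndex hk hkn
  have hnat : t₁.realize (c ∘ natTuple n) = t₂.realize (c ∘ natTuple n ∘ ρ) :=
    term_realize_eq_comp_of_realize_iff (fun φ => hindisc n φ β _ hβ (natTuple_strictMono n))
      t₁ t₂ ρ heq
  have hσ : σ₁ (u ∘ natTuple n) = σ₂ (u ∘ natTuple n ∘ ρ) := by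
    rw [← hf₁, hnat]
    exact hshift _ t₂ _ le_rfl σ₂ hσ₂ hf₂ (fun j => (ρ j : ℕ))
      (Fin.val_strictMono.comp (tailIndex_strictMono hk hkn))
  have hβρ : StrictMono (β ∘ ρ) := hβ.comp (tailIndex_strictMono hk hkn)
  have hnatρ : StrictMono (natTuple n ∘ ρ) :=
    (natTuple_strictMono n).comp (tailIndex_strictMono hk hkn)
  exact ((hufam n _ σ₁ σ₂ hσ₁ hσ₂ _ β _ (β ∘ ρ) (natTuple_strictMono n) hβ hnatρ hβρ
    (sameOrderType_comp (natTuple_strictMono n) hβ ρ)).1 hσ).symm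

end Paper
end
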